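/- Under the update sequence where the minimum-opinion agent always updates, the minimum opinion after one step satisfies x_{μ(x(t))}(t+1) ≥ x_{μ(x(0))}(0) + (1/k)·(y(0) − x_{μ(x(0))}(0)), where y(0) = max_{i ∈ N_{μ(x(0))}} x_i(0). -/

import Mathlib

open scoped Classical
open Finset

noncomputable def nearList {n : ℕ} (x : Fin n → ℝ) (i : Fin n) : List (Fin n) :=
  @List.insertionSort (Fin n)
    (fun j j' => |x j - x i| < |x j' - x i| ∨ (|x j - x i| = |x j' - x i| ∧ j ≤ j'))
    (Classical.decRel _) (List.finRange n)

/-- The set of the `k` agents nearest to `i` in opinion distance (ties broken by lower index). -/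
noncomputable def nbr {n : ℕ} (k : ℕ) (x : Fin n → ℝ) (i : Fin n) : Finset (Fin n) :=
  ((nearList x i).take k).toFinset

/-- The asynchronous update `f(x,i)`. -/
noncomputable def upd {n : ℕ} (k : ℕ) (x : Fin n → ℝ) (i : Fin n) : Fin n → ℝ :=
  Function.update x i ((∑ j ∈ nbr k x i, x j) / k)

/-- A configuration is clustered if all neighbors of every agent share its opinion. -/
def Clustered {n : ℕ} (k : ℕ) (x : Fin n → ℝ) : Prop :=
  ∀ i : Fin n, ∀ j ∈ nbr k x i, x j = x i

/-- `μ(x)`: lowest index attaining the minimum. -/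
noncomputable def argminIdx {n : ℕ} [NeZero n] (x : Fin n → ℝ) : Fin n :=
  (Finset.univ.filter fun i => ∀ j, x i ≤ x j).min' (by
    obtain ⟨i, -, hi⟩ := Finset.exists_min_image Finset.univ x Finset.univ_nonempty
    exact ⟨i, Finset.mem_filter.mpr ⟨Finset.mem_univ _, fun j => hi j (Finset.mem_univ j)⟩⟩)

/-- `M(x)`: lowest index attaining the maximum. -/
noncomputable def argmaxIdx {n : ℕ} [NeZero n] (x : Fin n → ℝ) : Fin n :=
  argminIdx (fun i => -x i)

/-- Trajectory of the dynamics with (possibly state-dependent) update selector `σ`. -/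
noncomputable def traj {n : ℕ} (k : ℕ) (σ : ℕ → (Fin n → ℝ) → Fin n) (x0 : Fin n → ℝ) :
    ℕ → Fin n → ℝ
  | 0 => x0
  | t + 1 => upd k (traj k σ x0 t) (σ t (traj k σ x0 t))

/-!
Updating the agent `μ(x)` replaces the minimal opinion by an average of opinions that are all
at least the minimum, so no opinion ever decreases: `x(0) ≤ x(t)` pointwise. The opinions below
`y(0)` at time `0` all lie in `N_{μ(x(0))}` and exclude its maximiser, so fewer than `k` agents
are below `y(0)` at time `0`, hence at every later time. Thus the `k` neighbours averaged at
time `t` include one agent at `y(0)` or above, the others being at least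
`m = x_{μ(x(0))}(0)`, and the average is at least `((k - 1) m + y(0)) / k`.
-/

lemma card_sub_one_mul_add_le_sum {ι : Type*} {s : Finset ι} {f : ι → ℝ} {m c : ℝ}
    (hm : ∀ i ∈ s, m ≤ f i) {j : ι} (hj : j ∈ s) (hc : c ≤ f j) :
    ((#s : ℝ) - 1) * m + c ≤ ∑ i ∈ s, f i := by
  have hcard : ((#(s.erase j) : ℕ) : ℝ) = #s - 1 := by
    rw [card_erase_of_mem hj, Nat.cast_sub (card_pos.mpr ⟨j, hj⟩), Nat.cast_one]
  have hrest : #(s.erase j) • m ≤ ∑ i ∈ s.erase j, f i :=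
    card_nsmul_le_sum _ _ _ fun i hi => hm i (mem_of_mem_erase hi)
  rw [nsmul_eq_mul, hcard] at hrest
  rw [← add_sum_erase _ _ hj]
  linarith

section Neighbours

variable {n k : ℕ}

lemma nearList_perm (x : Fin n → ℝ) (i : Fin n) : (nearList x i).Perm (List.finRange n) :=
  @List.perm_insertionSort (Fin n) _ (Classical.decRel _) (List.finRange n)

lemma nearList_pairwise (x : Fin n → ℝ) (i : Fin n) :
    (nearList x i).Pairwise fun j j' => |x j - x i| ≤ |x j' - x i| := by
  let r : Fin n → Fin n → Prop :=
    fun j j' => |x j - x i| < |x j' - x i| ∨ (|x j - x i| = |x j' - x i| ∧ j ≤ j')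
  have : Std.Total r := ⟨fun a b => by
    rcases lt_trichotomy |x a - x i| |x b - x i| with h | h | h
    · exact .inl (.inl h)
    · exact (le_total a b).imp (fun hab => .inr ⟨h, hab⟩) (fun hba => .inr ⟨h.symm, hba⟩)
    · exact .inr (.inl h)⟩
  have : IsTrans (Fin n) r := ⟨by
    rintro a b c (hab | ⟨hab, hab'⟩) (hbc | ⟨hbc, hbc'⟩)
    · exact .inl (hab.trans hbc)
    · exact .inl (hbc ▸ hab)
    · exact .inl (hab ▸ hbc)
    · exact .inr ⟨hab.trans hbc, hab'.trans hbc'⟩⟩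
  exact (@List.pairwise_insertionSort _ r (Classical.decRel _) _ _ _).imp
    fun h => h.elim le_of_lt fun h => h.1.le

lemma card_nbr (hkn : k ≤ n) (x : Fin n → ℝ) (i : Fin n) : #(nbr k x i) = k := by
  have hnodup : (nearList x i).Nodup := (nearList_perm x i).nodup_iff.mpr (List.nodup_finRange n)
  rw [nbr, List.toFinset_card_of_nodup (hnodup.sublist (List.take_sublist _ _)),
    List.length_take, (nearList_perm x i).length_eq, List.length_finRange, min_eq_left hkn]

lemma abs_sub_le_of_mem_nbr_of_notMem {x : Fin n → ℝ} {i j j' : Fin n}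
    (hj' : j' ∈ nbr k x i) (hj : j ∉ nbr k x i) : |x j' - x i| ≤ |x j - x i| := by
  have hsplit := nearList_pairwise x i
  rw [← List.take_append_drop k (nearList x i)] at hsplit
  have hjl : j ∈ nearList x i := (nearList_perm x i).mem_iff.mpr (List.mem_finRange j)
  rw [← List.take_append_drop k (nearList x i), List.mem_append] at hjl
  refine (List.pairwise_append.mp hsplit).2.2 j' ?_ j (hjl.resolve_left ?_)
  · simpa [nbr] using hj'
  · simpa [nbr] using hj

lemma le_of_mem_nbr_of_notMem {x : Fin n → ℝ} {i j j' : Fin n} (hi : ∀ l, x i ≤ x l)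
    (hj' : j' ∈ nbr k x i) (hj : j ∉ nbr k x i) : x j' ≤ x j := by
  have h := abs_sub_le_of_mem_nbr_of_notMem hj' hj
  rwa [abs_of_nonneg (sub_nonneg.mpr (hi j')), abs_of_nonneg (sub_nonneg.mpr (hi j)),
    sub_le_sub_iff_right] at h

/-- Only the neighbours of a minimal agent `i` other than `j` can lie strictly below `x j`. -/
lemma card_filter_lt_lt {x : Fin n → ℝ} {i j : Fin n} (hkn : k ≤ n) (hi : ∀ l, x i ≤ x l)
    (hj : j ∈ nbr k x i) : #{l | x l < x j} < k := by
  have hsub : ({l | x l < x j} : Finset (Fin n)) ⊆ (nbr k x i).erase j := by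
    intro l hl
    rw [mem_filter] at hl
    refine mem_erase.mpr ⟨fun h => (h ▸ hl.2).false, ?_⟩
    by_contra hl'
    exact (le_of_mem_nbr_of_notMem hi hj hl').not_gt hl.2
  have hk : 0 < k := card_nbr hkn x i ▸ card_pos.mpr ⟨j, hj⟩
  calc #{l | x l < x j} ≤ #((nbr k x i).erase j) := card_le_card hsub
    _ < k := by rw [card_erase_of_mem hj, card_nbr hkn]; omega

lemma exists_mem_nbr_le_of_card_filter_lt {x : Fin n → ℝ} {c : ℝ} (hkn : k ≤ n)
    (h : #{l | x l < c} < k) (i : Fin n) : ∃ j ∈ nbr k x i, c ≤ x j := by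
  by_contra! hlt
  have hsub : nbr k x i ⊆ ({l | x l < c} : Finset (Fin n)) := fun j hj => mem_filter.mpr ⟨mem_univ j, hlt j hj⟩
  exact (card_le_card hsub).not_gt (by rwa [card_nbr hkn])

end Neighbours

section MinimumUpdate

variable {n k : ℕ}

lemma upd_self (x : Fin n → ℝ) (i : Fin n) : upd k x i i = (∑ j ∈ nbr k x i, x j) / k :=
  Function.update_self _ _ _

lemma le_upd_of_forall_le {x : Fin n → ℝ} {i : Fin n} (hk : 1 ≤ k) (hkn : k ≤ n)
    (hi : ∀ l, x i ≤ x l) : x ≤ upd k x i := by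
  intro j
  rcases eq_or_ne j i with rfl | hji
  · have hsum : #(nbr k x j) • x j ≤ ∑ l ∈ nbr k x j, x l :=
      card_nsmul_le_sum _ _ _ fun l _ => hi l
    rw [card_nbr hkn, nsmul_eq_mul] at hsum
    rw [upd_self, le_div_iff₀ (Nat.cast_pos.mpr hk)]
    linarith
  · exact (Function.update_of_ne hji _ _).ge

lemma argminIdx_le [NeZero n] (x : Fin n → ℝ) (j : Fin n) : x (argminIdx x) ≤ x j :=
  (mem_filter.mp (min'_mem (univ.filter fun i => ∀ j, x i ≤ x j) _)).2 j

lemma monotone_traj_argminIdx [NeZero n] (hk : 1 ≤ k) (hkn : k ≤ n) (x0 : Fin n → ℝ) :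
    Monotone (traj k (fun _ x => argminIdx x) x0) :=
  monotone_nat_of_le_succ fun _ => le_upd_of_forall_le hk hkn (argminIdx_le _)

end MinimumUpdate

/-- when the minimum-opinion agent always updates, after each update the new
opinion of the updating agent is at least `m + (1/k)(y(0) - m)` where `m = x_{μ(x(0))}(0)`. -/
theorem min_update_lower_bound {n k : ℕ} [NeZero n] (hk : 1 ≤ k) (hkn : k ≤ n)
    (x0 : Fin n → ℝ) (X : ℕ → Fin n → ℝ)
    (hX : X = traj k (fun _ x => argminIdx x) x0)
    (y0 : ℝ) (hy0 : y0 = sSup (x0 '' (nbr k x0 (argminIdx x0) : Set (Fin n)))) :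
    ∀ t : ℕ, x0 (argminIdx x0) + (1 / (k : ℝ)) * (y0 - x0 (argminIdx x0)) ≤
      X (t + 1) (argminIdx (X t)) := by
  intro t
  set m := x0 (argminIdx x0)
  have hle : x0 ≤ X t := hX ▸ monotone_traj_argminIdx hk hkn x0 (Nat.zero_le t)
  obtain ⟨jmax, hjmax, rfl⟩ : y0 ∈ x0 '' (nbr k x0 (argminIdx x0) : Set (Fin n)) := by
    rw [hy0, ← coe_image]
    exact ((card_pos.mp (by rw [card_nbr hkn]; omega)).image x0).csSup_mem
  have hcard : #{l | X t l < x0 jmax} < k :=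
    (card_le_card (monotone_filter_right _ fun l _ h => (hle l).trans_lt h)).trans_lt
      (card_filter_lt_lt hkn (argminIdx_le x0) hjmax)
  obtain ⟨j, hj, hjy⟩ := exists_mem_nbr_le_of_card_filter_lt hkn hcard (argminIdx (X t))
  have hsum := card_sub_one_mul_add_le_sum
    (fun l _ => (argminIdx_le x0 l).trans (hle l)) hj hjy
  rw [card_nbr hkn] at hsum
  rw [hX, traj, ← hX, upd_self, le_div_iff₀ (Nat.cast_pos.mpr hk)]
  calc (m + 1 / (k : ℝ) * (x0 jmax - m)) * k = ((k : ℝ) - 1) * m + x0 jmax := by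
        field_simp; ring
    _ ≤ _ := hsum
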